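/- The hyperbolic smoothing Ψ̃^H(S; L) = tr(√(S S^T + L L^T)) satisfies upper stability with constant 1: for PSD matrices L₁ ⪯ L₂ and any S ∈ R^{m×n}, Ψ̃^H(S; L₂) − Ψ̃^H(S; L₁) ≤ tr(L₂) − tr(L₁). -/

import Mathlib

open Matrix Finset
open scoped Classical

noncomputable def psqrt {m : ℕ} (A : Matrix (Fin m) (Fin m) ℝ) : Matrix (Fin m) (Fin m) ℝ :=
  if h : A.PosSemidef then
    h.1.eigenvectorUnitary.1 * diagonal (Real.sqrt ∘ h.1.eigenvalues) *
      (star h.1.eigenvectorUnitary : Matrix (Fin m) (Fin m) ℝ) else 0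

noncomputable def nuclearNorm {m : ℕ} {n : Type*} [Fintype n]
    (A : Matrix (Fin m) n ℝ) : ℝ :=
  (psqrt (A * Aᵀ)).trace

/-- The hyperbolic smoothing `Ψ̃^H(S; L) = tr(√(S Sᵀ + L Lᵀ))`. -/
noncomputable def psiH {m n : ℕ} (S : Matrix (Fin m) (Fin n) ℝ)
    (L : Matrix (Fin m) (Fin m) ℝ) : ℝ :=
  (psqrt (S * Sᵀ + L * Lᵀ)).trace

/-!
`Ψ̃^H(S; L)` is the nuclear norm of the augmented matrix `[S L]`, so the claim follows from the
triangle inequality `‖[S L₂]‖_* ≤ ‖[S L₁]‖_* + ‖[0 (L₂ - L₁)]‖_*` and `‖D‖_* = tr D` for `D ⪰ 0`.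
The triangle inequality comes from `‖A‖_* = max {tr (A Xᵀ) : X Xᵀ ⪯ 1}`: the maximum is attained
at the polar factor `U` of `A = P U`, and `tr (P U Xᵀ) ≤ tr P` for `P ⪰ 0` and contractions `U`, `X`
follows from `tr (P (U - X) (U - X)ᵀ) ≥ 0`.
-/

open scoped MatrixOrder

namespace Matrix

variable {m k : Type*}

theorem transpose_eq_self_of_isSelfAdjoint {P : Matrix m m ℝ} (hP : IsSelfAdjoint P) : Pᵀ = P := by
  rw [← conjTranspose_eq_transpose_of_trivial]
  exact hP

variable [Fintype m] [Fintype k]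

theorem mul_transpose_self_nonneg (A : Matrix m k ℝ) : 0 ≤ A * Aᵀ := by
  simpa using (posSemidef_self_mul_conjTranspose A).nonneg

variable [DecidableEq m]

theorem trace_mul_nonneg {P M : Matrix m m ℝ} (hP : 0 ≤ P) (hM : 0 ≤ M) :
    0 ≤ (P * M).trace := by
  obtain ⟨R, rfl⟩ := CStarAlgebra.nonneg_iff_eq_star_mul_self.mp hP
  rw [star_eq_conjTranspose, Matrix.mul_assoc, trace_mul_comm]
  simpa [Matrix.mul_assoc] using (hM.posSemidef.mul_mul_conjTranspose_same R).trace_nonneg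

theorem trace_mul_mul_transpose_le {P : Matrix m m ℝ} {U X : Matrix m k ℝ} (hP : 0 ≤ P)
    (hU : U * Uᵀ ≤ 1) (hX : X * Xᵀ ≤ 1) : (P * (U * Xᵀ)).trace ≤ P.trace := by
  have hUX := trace_mul_nonneg hP (mul_transpose_self_nonneg (U - X))
  have hUU := trace_mul_nonneg hP (sub_nonneg.mpr hU)
  have hXX := trace_mul_nonneg hP (sub_nonneg.mpr hX)
  have hswap : (P * (X * Uᵀ)).trace = (P * (U * Xᵀ)).trace := by
    rw [← trace_transpose, transpose_mul, transpose_mul, transpose_transpose,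
      transpose_eq_self_of_isSelfAdjoint hP.isSelfAdjoint, trace_mul_comm]
  simp only [transpose_sub, Matrix.sub_mul, Matrix.mul_sub, Matrix.mul_one, trace_sub]
    at hUX hUU hXX
  linarith

theorem cfc_mul_cfc (f g : ℝ → ℝ) (G : Matrix m m ℝ) :
    cfc f G * cfc g G = cfc (fun x => f x * g x) G :=
  (cfc_mul f g G (G.finite_spectrum.continuousOn f) (G.finite_spectrum.continuousOn g)).symm

theorem transpose_cfc (f : ℝ → ℝ) (G : Matrix m m ℝ) : (cfc f G)ᵀ = cfc f G :=
  transpose_eq_self_of_isSelfAdjoint (cfc_predicate f G)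

theorem sqrt_eq_cfc {G : Matrix m m ℝ} (hG : 0 ≤ G) : CFC.sqrt G = cfc Real.sqrt G := by
  rw [CFC.sqrt_eq_real_sqrt G hG, cfcₙ_eq_cfc]

theorem inv_sqrt_mul_self_mul_inv_sqrt_le_one (x : ℝ) : (√x)⁻¹ * x * (√x)⁻¹ ≤ 1 := by
  rcases le_or_gt x 0 with hx | hx
  · simp [Real.sqrt_eq_zero'.mpr hx]
  · have hsq := Real.sq_sqrt hx.le
    have hpos := Real.sqrt_pos.mpr hx
    field_simp
    linarith

/-- Since `(√0)⁻¹ = 0`, the matrix `cfc (fun x ↦ (√x)⁻¹) (A * Aᵀ)` is the pseudo-inverse of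
`√(A * Aᵀ)`, and `A = √(A * Aᵀ) * polarFactor A` is the polar decomposition of `A`. -/
noncomputable def polarFactor (A : Matrix m k ℝ) : Matrix m k ℝ :=
  cfc (fun x : ℝ => (√x)⁻¹) (A * Aᵀ) * A

theorem polarFactor_mul_transpose_le_one (A : Matrix m k ℝ) :
    polarFactor A * (polarFactor A)ᵀ ≤ 1 := by
  calc polarFactor A * (polarFactor A)ᵀ
      = cfc (fun x : ℝ => (√x)⁻¹) (A * Aᵀ) * cfc (fun x => x) (A * Aᵀ) *
          cfc (fun x : ℝ => (√x)⁻¹) (A * Aᵀ) := by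
        rw [polarFactor, transpose_mul, transpose_cfc,
          cfc_id' ℝ (A * Aᵀ) (mul_transpose_self_nonneg A).isSelfAdjoint]
        simp only [Matrix.mul_assoc]
    _ ≤ 1 := by
      rw [cfc_mul_cfc, cfc_mul_cfc]
      exact cfc_le_one _ _ fun x _ => inv_sqrt_mul_self_mul_inv_sqrt_le_one x

theorem mul_transpose_polarFactor (A : Matrix m k ℝ) :
    A * (polarFactor A)ᵀ = CFC.sqrt (A * Aᵀ) := by
  calc A * (polarFactor A)ᵀ
      = cfc (fun x => x) (A * Aᵀ) * cfc (fun x : ℝ => (√x)⁻¹) (A * Aᵀ) := by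
        rw [polarFactor, transpose_mul, transpose_cfc,
          cfc_id' ℝ (A * Aᵀ) (mul_transpose_self_nonneg A).isSelfAdjoint,
          Matrix.mul_assoc]
    _ = CFC.sqrt (A * Aᵀ) := by
      simp only [cfc_mul_cfc, ← div_eq_mul_inv, Real.div_sqrt,
        sqrt_eq_cfc (mul_transpose_self_nonneg A)]

theorem sqrt_mul_polarFactor (A : Matrix m k ℝ) : CFC.sqrt (A * Aᵀ) * polarFactor A = A := by
  set G := A * Aᵀ
  set P := CFC.sqrt G
  set Q := cfc (fun x : ℝ => (√x)⁻¹) G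
  have hG : 0 ≤ G := mul_transpose_self_nonneg A
  have hPQP : P * Q * P = P := by
    simp only [P, Q, sqrt_eq_cfc hG, cfc_mul_cfc, mul_inv_mul_cancel]
  have hkernel : (1 - P * Q) * G = 0 := by
    rw [← CFC.sqrt_mul_sqrt_self G hG, ← Matrix.mul_assoc, Matrix.sub_mul, Matrix.one_mul, hPQP,
      sub_self, Matrix.zero_mul]
  have hzero : (1 - P * Q) * A = 0 := by
    rwa [← mul_self_mul_conjTranspose_eq_zero, conjTranspose_eq_transpose_of_trivial]
  rw [Matrix.sub_mul, Matrix.one_mul, sub_eq_zero] at hzero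
  rw [polarFactor, ← Matrix.mul_assoc, ← hzero]

end Matrix

theorem psqrt_eq_sqrt {m : ℕ} {A : Matrix (Fin m) (Fin m) ℝ} (hA : 0 ≤ A) :
    psqrt A = CFC.sqrt A := by
  rw [psqrt, dif_pos hA.posSemidef, sqrt_eq_cfc hA, hA.posSemidef.1.cfc_eq, IsHermitian.cfc,
    Unitary.conjStarAlgAut_apply]
  rfl

section NuclearNorm

variable {m : ℕ} {k : Type*} [Fintype k]

theorem nuclearNorm_eq_trace_sqrt (A : Matrix (Fin m) k ℝ) :
    nuclearNorm A = (CFC.sqrt (A * Aᵀ)).trace := by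
  rw [nuclearNorm, psqrt_eq_sqrt (mul_transpose_self_nonneg A)]

theorem trace_mul_transpose_le_nuclearNorm (A : Matrix (Fin m) k ℝ) {X : Matrix (Fin m) k ℝ}
    (hX : X * Xᵀ ≤ 1) : (A * Xᵀ).trace ≤ nuclearNorm A := by
  rw [nuclearNorm_eq_trace_sqrt]
  conv_lhs => rw [← sqrt_mul_polarFactor A, Matrix.mul_assoc]
  exact trace_mul_mul_transpose_le (CFC.sqrt_nonneg _) (polarFactor_mul_transpose_le_one A) hX

theorem nuclearNorm_add_le (A B : Matrix (Fin m) k ℝ) :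
    nuclearNorm (A + B) ≤ nuclearNorm A + nuclearNorm B := by
  have hU := polarFactor_mul_transpose_le_one (A + B)
  calc nuclearNorm (A + B) = ((A + B) * (polarFactor (A + B))ᵀ).trace := by
        rw [nuclearNorm_eq_trace_sqrt, mul_transpose_polarFactor]
    _ = (A * (polarFactor (A + B))ᵀ).trace + (B * (polarFactor (A + B))ᵀ).trace := by
        rw [Matrix.add_mul, trace_add]
    _ ≤ nuclearNorm A + nuclearNorm B :=
        add_le_add (trace_mul_transpose_le_nuclearNorm A hU)
          (trace_mul_transpose_le_nuclearNorm B hU)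

theorem nuclearNorm_eq_trace_of_nonneg {D : Matrix (Fin m) (Fin m) ℝ} (hD : 0 ≤ D) :
    nuclearNorm D = D.trace := by
  rw [nuclearNorm_eq_trace_sqrt, transpose_eq_self_of_isSelfAdjoint hD.isSelfAdjoint,
    CFC.sqrt_mul_self D hD]

theorem psiH_eq_nuclearNorm_fromCols {n : ℕ} (S : Matrix (Fin m) (Fin n) ℝ)
    (L : Matrix (Fin m) (Fin m) ℝ) : psiH S L = nuclearNorm (fromCols S L) := by
  rw [psiH, nuclearNorm, transpose_fromCols, fromCols_mul_fromRows]

theorem nuclearNorm_fromCols_zero_left {n : ℕ} (A : Matrix (Fin m) k ℝ) :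
    nuclearNorm (fromCols (0 : Matrix (Fin m) (Fin n) ℝ) A) = nuclearNorm A := by
  rw [nuclearNorm, nuclearNorm, transpose_fromCols, fromCols_mul_fromRows, Matrix.zero_mul,
    zero_add]

end NuclearNorm

theorem stmt11_general {m n : ℕ} (S : Matrix (Fin m) (Fin n) ℝ)
    (L₁ L₂ : Matrix (Fin m) (Fin m) ℝ)
    (h₁₂ : (L₂ - L₁).PosSemidef) :
    psiH S L₂ - psiH S L₁ ≤ L₂.trace - L₁.trace := by
  rw [sub_le_iff_le_add']
  calc psiH S L₂ = nuclearNorm (fromCols S L₁ + fromCols 0 (L₂ - L₁)) := by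
        rw [psiH_eq_nuclearNorm_fromCols]
        congr 1
        ext i (j | j) <;> simp
    _ ≤ nuclearNorm (fromCols S L₁) + nuclearNorm (fromCols 0 (L₂ - L₁)) := nuclearNorm_add_le _ _
    _ = psiH S L₁ + (L₂.trace - L₁.trace) := by
        rw [nuclearNorm_fromCols_zero_left, nuclearNorm_eq_trace_of_nonneg h₁₂.nonneg, trace_sub,
          psiH_eq_nuclearNorm_fromCols]

/-- the hyperbolic smoothing satisfies upper stability with constant
`1`: for PSD matrices `L₁ ⪯ L₂` and any `S`,
`Ψ̃^H(S; L₂) − Ψ̃^H(S; L₁) ≤ tr L₂ − tr L₁`. -/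
theorem stmt11 {m n : ℕ} (S : Matrix (Fin m) (Fin n) ℝ)
    (L₁ L₂ : Matrix (Fin m) (Fin m) ℝ) (h₁ : L₁.PosSemidef)
    (h₁₂ : (L₂ - L₁).PosSemidef) :
    psiH S L₂ - psiH S L₁ ≤ L₂.trace - L₁.trace :=
  stmt11_general S L₁ L₂ h₁₂
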